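/- arXiv:2511.20568 — 2 statements merged into one kernel-verified Lean document; each statement's English description precedes it below -/
import Mathlib

section
/- Let (M,g) be a Riemannian manifold, H a 3-form, and ∇̂ the metric connection with torsion H. Then the curvature R̂ of ∇̂ satisfies 3 R̂_{[ijk]m} = -(3/2) ∇̂_{[i} H_{jk]m} - (1/2) ∇̂_m H_{ijk} - (1/2)(dH)_{ijkm}. -/
open scoped BigOperators

noncomputable section

variable {n : ℕ}

/-- Coordinate partial derivative of a function on `ℝⁿ` in the `i`-th coordinate direction. -/
def pd (i : Fin n) (f : EuclideanSpace ℝ (Fin n) → ℝ) (x : EuclideanSpace ℝ (Fin n)) : ℝ :=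
  fderiv ℝ f x (EuclideanSpace.single i 1)

/-- Lowered Christoffel symbols `Γ_{kij}` of the Levi-Civita connection of the metric `g`. -/
def christoffelLow (g : EuclideanSpace ℝ (Fin n) → Fin n → Fin n → ℝ) (k i j : Fin n)
    (x : EuclideanSpace ℝ (Fin n)) : ℝ :=
  (1 / 2) * (pd i (fun y => g y j k) x + pd j (fun y => g y i k) x - pd k (fun y => g y i j) x)

/-- Christoffel symbols `Γ^k_{ij}` of the Levi-Civita connection `∇` of `g`. -/
def christoffel (g ginv : EuclideanSpace ℝ (Fin n) → Fin n → Fin n → ℝ) (k i j : Fin n)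
    (x : EuclideanSpace ℝ (Fin n)) : ℝ :=
  ∑ l, ginv x k l * christoffelLow g l i j x

/-- Connection coefficients `Γ̂^k_{ij} = Γ^k_{ij} + ½ H^k_{ij}` of the metric connection `∇̂`
with torsion the totally skew 3-form `H` (indices raised with `g`). -/
def christoffelHat (g ginv : EuclideanSpace ℝ (Fin n) → Fin n → Fin n → ℝ)
    (H : EuclideanSpace ℝ (Fin n) → Fin n → Fin n → Fin n → ℝ) (k i j : Fin n)
    (x : EuclideanSpace ℝ (Fin n)) : ℝ :=
  christoffel g ginv k i j x + (1 / 2) * ∑ l, ginv x k l * H x l i j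

/-- Curvature `R̂_{ij}{}^k{}_m` of `∇̂`, with the convention
`(∇̂_i∇̂_j - ∇̂_j∇̂_i) X^k = R̂_{ij}{}^k{}_m X^m` (modulo the torsion term). -/
def curvHatUp (g ginv : EuclideanSpace ℝ (Fin n) → Fin n → Fin n → ℝ)
    (H : EuclideanSpace ℝ (Fin n) → Fin n → Fin n → Fin n → ℝ) (i j k m : Fin n)
    (x : EuclideanSpace ℝ (Fin n)) : ℝ :=
  pd i (christoffelHat g ginv H k j m) x - pd j (christoffelHat g ginv H k i m) x
    + ∑ p, (christoffelHat g ginv H k i p x * christoffelHat g ginv H p j m x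
        - christoffelHat g ginv H k j p x * christoffelHat g ginv H p i m x)

/-- Fully lowered curvature tensor `R̂_{ijkm} = g_{kp} R̂_{ij}{}^p{}_m` of `∇̂`. -/
def curvHat (g ginv : EuclideanSpace ℝ (Fin n) → Fin n → Fin n → ℝ)
    (H : EuclideanSpace ℝ (Fin n) → Fin n → Fin n → Fin n → ℝ) (i j k m : Fin n)
    (x : EuclideanSpace ℝ (Fin n)) : ℝ :=
  ∑ p, g x k p * curvHatUp g ginv H i j p m x

/-- Covariant derivative `∇̂_i H_{jkm}` of the 3-form `H` with respect to `∇̂`. -/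
def nablaHatH (g ginv : EuclideanSpace ℝ (Fin n) → Fin n → Fin n → ℝ)
    (H : EuclideanSpace ℝ (Fin n) → Fin n → Fin n → Fin n → ℝ) (i j k m : Fin n)
    (x : EuclideanSpace ℝ (Fin n)) : ℝ :=
  pd i (fun y => H y j k m) x
    - ∑ p, (christoffelHat g ginv H p i j x * H x p k m
        + christoffelHat g ginv H p i k x * H x j p m
        + christoffelHat g ginv H p i m x * H x j k p)

/-- Covariant derivative `∇_i H_{jkm}` of the 3-form `H` with respect to the
Levi-Civita connection `∇` of `g`. -/
def nablaLCH (g ginv : EuclideanSpace ℝ (Fin n) → Fin n → Fin n → ℝ)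
    (H : EuclideanSpace ℝ (Fin n) → Fin n → Fin n → Fin n → ℝ) (i j k m : Fin n)
    (x : EuclideanSpace ℝ (Fin n)) : ℝ :=
  pd i (fun y => H y j k m) x
    - ∑ p, (christoffel g ginv p i j x * H x p k m
        + christoffel g ginv p i k x * H x j p m
        + christoffel g ginv p i m x * H x j k p)

/-- Components `(dH)_{ijkm}` of the exterior derivative of the 3-form `H`. -/
def extDerH (H : EuclideanSpace ℝ (Fin n) → Fin n → Fin n → Fin n → ℝ) (i j k m : Fin n)
    (x : EuclideanSpace ℝ (Fin n)) : ℝ :=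
  pd i (fun y => H y j k m) x - pd j (fun y => H y i k m) x
    + pd k (fun y => H y i j m) x - pd m (fun y => H y i j k) x

/-- `g` is a smooth Riemannian metric (in the fixed global chart) with inverse `ginv`. -/
def IsRiemannianData (g ginv : EuclideanSpace ℝ (Fin n) → Fin n → Fin n → ℝ) : Prop :=
  (∀ x i j, g x i j = g x j i) ∧
  (∀ (x : EuclideanSpace ℝ (Fin n)) (v : Fin n → ℝ), v ≠ 0 →
    0 < ∑ i, ∑ j, g x i j * v i * v j) ∧
  (∀ x i j, (∑ k, g x i k * ginv x k j) = if i = j then (1 : ℝ) else 0) ∧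
  (∀ i j, ContDiff ℝ (⊤ : ℕ∞) fun x => g x i j) ∧
  (∀ i j, ContDiff ℝ (⊤ : ℕ∞) fun x => ginv x i j)

/-- `H` is a smooth (totally antisymmetric) 3-form. -/
def IsThreeForm (H : EuclideanSpace ℝ (Fin n) → Fin n → Fin n → Fin n → ℝ) : Prop :=
  (∀ x i j k, H x i j k = -H x j i k) ∧
  (∀ x i j k, H x i j k = -H x i k j) ∧
  (∀ i j k, ContDiff ℝ (⊤ : ℕ∞) fun x => H x i j k)

/-!
Write `Γ̂_{kij} = Γ_{kij} + ½ H_{kij}` for the lowered coefficients of `∇̂`. Metric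
compatibility `∂_i g_{kl} = Γ̂_{kil} + Γ̂_{lik}` together with the symmetry of second
derivatives makes `R̂_{ijkm}` antisymmetric in `k, m`, and the torsion identity
`Γ̂_{kij} - Γ̂_{kji} = H_{kij}` turns the cyclic sum of `R̂_{ijmk}` over `i, j, k` into
`𝔖 (∂_i H_{jkm} - Γ̂^p_{im} H_{pjk})`. Expanding `∇̂H` and `dH`, what is left is an identity
between the contractions `Γ̂^p_{ab} H_{pcd}`: exchanging `a` and `b` changes such a contraction
by `⟨H_{·ab}, H_{·cd}⟩`, which is symmetric in the two index pairs.
-/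

section PartialDerivative

variable {f h : EuclideanSpace ℝ (Fin n) → ℝ} {x : EuclideanSpace ℝ (Fin n)}

lemma pd_add (i : Fin n) (hf : DifferentiableAt ℝ f x) (hh : DifferentiableAt ℝ h x) :
    pd i (fun y => f y + h y) x = pd i f x + pd i h x := by
  simp [pd, fderiv_fun_add hf hh]

lemma pd_sub (i : Fin n) (hf : DifferentiableAt ℝ f x) (hh : DifferentiableAt ℝ h x) :
    pd i (fun y => f y - h y) x = pd i f x - pd i h x := by
  simp [pd, fderiv_fun_sub hf hh]

lemma pd_neg (i : Fin n) : pd i (fun y => -f y) x = -pd i f x := by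
  simp [pd]

lemma pd_mul (i : Fin n) (hf : DifferentiableAt ℝ f x) (hh : DifferentiableAt ℝ h x) :
    pd i (fun y => f y * h y) x = pd i f x * h x + f x * pd i h x := by
  simp [pd, fderiv_fun_mul hf hh]
  ring

lemma pd_sum {ι : Type*} (s : Finset ι) {F : ι → EuclideanSpace ℝ (Fin n) → ℝ} (i : Fin n)
    (hF : ∀ l ∈ s, DifferentiableAt ℝ (F l) x) :
    pd i (fun y => ∑ l ∈ s, F l y) x = ∑ l ∈ s, pd i (F l) x := by
  simp [pd, fderiv_fun_sum hF]

lemma contDiff_pd (i : Fin n) (hf : ContDiff ℝ (⊤ : ℕ∞) f) :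
    ContDiff ℝ (⊤ : ℕ∞) (fun y => pd i f y) :=
  (hf.fderiv_right (m := ((⊤ : ℕ∞) : WithTop ℕ∞)) (by simp)).clm_apply contDiff_const

lemma pd_comm (i j : Fin n) (hf : ContDiff ℝ 2 f) :
    pd i (fun y => pd j f y) x = pd j (fun y => pd i f y) x := by
  have hf' : Differentiable ℝ (fderiv ℝ f) :=
    (hf.fderiv_right (m := 1) (by norm_num)).differentiable (by simp)
  have hsecond : ∀ a b : Fin n, pd a (fun y => pd b f y) x
      = fderiv ℝ (fderiv ℝ f) x (EuclideanSpace.single a 1) (EuclideanSpace.single b 1) := by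
    intro a b
    simp [pd, fderiv_clm_apply (hf' x) (differentiableAt_const _)]
  rw [hsecond, hsecond]
  exact hf.contDiffAt.isSymmSndFDerivAt (by simp) _ _

end PartialDerivative

section Connection

variable {g ginv : EuclideanSpace ℝ (Fin n) → Fin n → Fin n → ℝ}
  {H : EuclideanSpace ℝ (Fin n) → Fin n → Fin n → Fin n → ℝ}

lemma IsRiemannianData.ginv_symm (hg : IsRiemannianData g ginv) (x : EuclideanSpace ℝ (Fin n))
    (i j : Fin n) : ginv x i j = ginv x j i := by
  classical
  let G : Matrix (Fin n) (Fin n) ℝ := Matrix.of fun a b => g x a b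
  have hG : G.IsSymm := Matrix.IsSymm.ext fun a b => hg.1 x b a
  have hGinv : G⁻¹ = Matrix.of fun a b => ginv x a b := Matrix.inv_eq_right_inv <| by
    ext a b
    simpa [G, Matrix.mul_apply, Matrix.one_apply] using hg.2.2.1 x a b
  simpa [hGinv] using (hG.inv.apply i j).symm

lemma IsThreeForm.cycle (hH : IsThreeForm H) (x : EuclideanSpace ℝ (Fin n)) (a b c : Fin n) :
    H x a b c = H x b c a := by
  rw [hH.1, hH.2.1, neg_neg]

lemma contDiff_christoffelLow (hg : IsRiemannianData g ginv) (k i j : Fin n) :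
    ContDiff ℝ (⊤ : ℕ∞) (christoffelLow g k i j) :=
  contDiff_const.mul (((contDiff_pd i (hg.2.2.2.1 j k)).add
    (contDiff_pd j (hg.2.2.2.1 i k))).sub (contDiff_pd k (hg.2.2.2.1 i j)))

lemma contDiff_christoffelHat (hg : IsRiemannianData g ginv) (hH : IsThreeForm H)
    (k i j : Fin n) : ContDiff ℝ (⊤ : ℕ∞) (christoffelHat g ginv H k i j) :=
  (ContDiff.sum fun l _ => (hg.2.2.2.2 k l).mul (contDiff_christoffelLow hg l i j)).add
    (contDiff_const.mul (ContDiff.sum fun l _ => (hg.2.2.2.2 k l).mul (hH.2.2 l i j)))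

/-- `Γ̂_{kij}`, the coefficients of `∇̂` with the upper index lowered. -/
def christoffelHatLow (g : EuclideanSpace ℝ (Fin n) → Fin n → Fin n → ℝ)
    (H : EuclideanSpace ℝ (Fin n) → Fin n → Fin n → Fin n → ℝ) (k i j : Fin n)
    (x : EuclideanSpace ℝ (Fin n)) : ℝ :=
  christoffelLow g k i j x + (1 / 2) * H x k i j

lemma contDiff_christoffelHatLow (hg : IsRiemannianData g ginv) (hH : IsThreeForm H)
    (k i j : Fin n) : ContDiff ℝ (⊤ : ℕ∞) (christoffelHatLow g H k i j) :=
  (contDiff_christoffelLow hg k i j).add (contDiff_const.mul (hH.2.2 k i j))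

lemma christoffelHat_eq_sum_ginv_mul (x : EuclideanSpace ℝ (Fin n)) (k i j : Fin n) :
    christoffelHat g ginv H k i j x = ∑ l, ginv x k l * christoffelHatLow g H l i j x := by
  simp only [christoffelHat, christoffel, christoffelHatLow, Finset.mul_sum,
    ← Finset.sum_add_distrib]
  exact Finset.sum_congr rfl fun l _ => by ring

lemma IsRiemannianData.sum_g_mul_christoffelHat (hg : IsRiemannianData g ginv)
    (x : EuclideanSpace ℝ (Fin n)) (k i j : Fin n) :
    ∑ p, g x k p * christoffelHat g ginv H p i j x = christoffelHatLow g H k i j x := by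
  simp_rw [christoffelHat_eq_sum_ginv_mul, Finset.mul_sum, ← mul_assoc]
  rw [Finset.sum_comm]
  simp_rw [← Finset.sum_mul, hg.2.2.1 x k, ite_mul, one_mul, zero_mul]
  simp

lemma IsRiemannianData.pd_g_eq_christoffelHatLow_add (hg : IsRiemannianData g ginv)
    (hH : IsThreeForm H) (x : EuclideanSpace ℝ (Fin n)) (i k l : Fin n) :
    pd i (fun y => g y k l) x = christoffelHatLow g H k i l x + christoffelHatLow g H l i k x := by
  have hgkl : (fun y => g y l k) = fun y => g y k l := funext fun y => hg.1 y l k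
  have hHlik : H x l i k = -H x k i l := by rw [hH.cycle, hH.1]
  simp only [christoffelHatLow, christoffelLow, hgkl, hHlik]
  ring

lemma IsRiemannianData.christoffelHatLow_sub_swap (hg : IsRiemannianData g ginv)
    (hH : IsThreeForm H) (x : EuclideanSpace ℝ (Fin n)) (p a b : Fin n) :
    christoffelHatLow g H p a b x - christoffelHatLow g H p b a x = H x p a b := by
  have hgab : (fun y => g y b a) = fun y => g y a b := funext fun y => hg.1 y b a
  simp only [christoffelHatLow, christoffelLow, hgab, hH.2.1 x p b a]
  ring

lemma IsRiemannianData.sum_christoffelHatLow_mul_christoffelHat_comm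
    (hg : IsRiemannianData g ginv) (x : EuclideanSpace ℝ (Fin n)) (a b c d : Fin n) :
    ∑ p, christoffelHatLow g H p a b x * christoffelHat g ginv H p c d x
      = ∑ p, christoffelHatLow g H p c d x * christoffelHat g ginv H p a b x := by
  simp_rw [christoffelHat_eq_sum_ginv_mul, Finset.mul_sum]
  rw [Finset.sum_comm]
  refine Finset.sum_congr rfl fun p _ => Finset.sum_congr rfl fun l _ => ?_
  rw [hg.ginv_symm x l p]
  ring

lemma IsRiemannianData.sum_g_mul_pd_christoffelHat (hg : IsRiemannianData g ginv)
    (hH : IsThreeForm H) (x : EuclideanSpace ℝ (Fin n)) (d a b k : Fin n) :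
    ∑ p, g x k p * pd d (christoffelHat g ginv H p a b) x
      = pd d (christoffelHatLow g H k a b) x
        - ∑ p, (christoffelHatLow g H k d p x + christoffelHatLow g H p d k x)
            * christoffelHat g ginv H p a b x := by
  have hlow : christoffelHatLow g H k a b
      = fun y => ∑ p, g y k p * christoffelHat g ginv H p a b y :=
    funext fun y => (hg.sum_g_mul_christoffelHat y k a b).symm
  have hdiff : ∀ p, DifferentiableAt ℝ (fun y => g y k p) x ∧
      DifferentiableAt ℝ (christoffelHat g ginv H p a b) x := fun p =>
    ⟨(hg.2.2.2.1 k p).differentiable (by simp) x,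
      (contDiff_christoffelHat hg hH p a b).differentiable (by simp) x⟩
  rw [hlow, pd_sum (F := fun p y => g y k p * christoffelHat g ginv H p a b y) _ d
    fun p _ => (hdiff p).1.mul (hdiff p).2]
  simp_rw [pd_mul d (hdiff _).1 (hdiff _).2, hg.pd_g_eq_christoffelHatLow_add hH,
    Finset.sum_add_distrib]
  ring

lemma IsRiemannianData.curvHat_eq (hg : IsRiemannianData g ginv) (hH : IsThreeForm H)
    (x : EuclideanSpace ℝ (Fin n)) (i j k m : Fin n) :
    curvHat g ginv H i j k m x
      = pd i (christoffelHatLow g H k j m) x - pd j (christoffelHatLow g H k i m) x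
        - ∑ p, christoffelHatLow g H p i k x * christoffelHat g ginv H p j m x
        + ∑ p, christoffelHatLow g H p j k x * christoffelHat g ginv H p i m x := by
  have hquad : ∀ a b : Fin n,
      ∑ p, g x k p * ∑ q, christoffelHat g ginv H p a q x * christoffelHat g ginv H q b m x
        = ∑ q, christoffelHatLow g H k a q x * christoffelHat g ginv H q b m x := by
    intro a b
    simp_rw [Finset.mul_sum, ← mul_assoc]
    rw [Finset.sum_comm]
    simp_rw [← Finset.sum_mul, hg.sum_g_mul_christoffelHat]
  simp only [curvHat, curvHatUp, mul_add, mul_sub, Finset.sum_add_distrib, Finset.sum_sub_distrib]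
  rw [hg.sum_g_mul_pd_christoffelHat hH x i j m k, hg.sum_g_mul_pd_christoffelHat hH x j i m k,
    hquad i j, hquad j i]
  simp only [add_mul, Finset.sum_add_distrib]
  ring

lemma IsRiemannianData.curvHat_swap_last (hg : IsRiemannianData g ginv) (hH : IsThreeForm H)
    (x : EuclideanSpace ℝ (Fin n)) (i j k m : Fin n) :
    curvHat g ginv H i j m k x = -curvHat g ginv H i j k m x := by
  have hpd_g : ∀ a b : Fin n,
      pd a (christoffelHatLow g H k b m) x + pd a (christoffelHatLow g H m b k) x
        = pd a (fun y => pd b (fun z => g z k m) y) x := by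
    intro a b
    have hsum : (fun y => pd b (fun z => g z k m) y)
        = fun y => christoffelHatLow g H k b m y + christoffelHatLow g H m b k y :=
      funext fun y => hg.pd_g_eq_christoffelHatLow_add hH y b k m
    rw [hsum, pd_add a ((contDiff_christoffelHatLow hg hH k b m).differentiable (by simp) x)
      ((contDiff_christoffelHatLow hg hH m b k).differentiable (by simp) x)]
  rw [hg.curvHat_eq hH x i j k m, hg.curvHat_eq hH x i j m k]
  linarith [hpd_g i j, hpd_g j i, pd_comm (x := x) i j ((hg.2.2.2.1 k m).of_le (by norm_cast)),
    hg.sum_christoffelHatLow_mul_christoffelHat_comm (H := H) x i k j m,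
    hg.sum_christoffelHatLow_mul_christoffelHat_comm (H := H) x i m j k]

/-- `Γ̂^p_{ab} H_{pcd}`. -/
def christoffelHatH (g ginv : EuclideanSpace ℝ (Fin n) → Fin n → Fin n → ℝ)
    (H : EuclideanSpace ℝ (Fin n) → Fin n → Fin n → Fin n → ℝ) (a b c d : Fin n)
    (x : EuclideanSpace ℝ (Fin n)) : ℝ :=
  ∑ p, christoffelHat g ginv H p a b x * H x p c d

/-- `⟨H_{·ab}, H_{·cd}⟩ = g^{pl} H_{lab} H_{pcd}`. -/
def innerH (ginv : EuclideanSpace ℝ (Fin n) → Fin n → Fin n → ℝ)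
    (H : EuclideanSpace ℝ (Fin n) → Fin n → Fin n → Fin n → ℝ) (a b c d : Fin n)
    (x : EuclideanSpace ℝ (Fin n)) : ℝ :=
  ∑ p, (∑ l, ginv x p l * H x l a b) * H x p c d

lemma IsRiemannianData.curvHat_cyclic (hg : IsRiemannianData g ginv) (hH : IsThreeForm H)
    (x : EuclideanSpace ℝ (Fin n)) (i j k m : Fin n) :
    curvHat g ginv H i j m k x + curvHat g ginv H j k m i x + curvHat g ginv H k i m j x
      = pd i (fun y => H y j k m) x + pd j (fun y => H y k i m) x + pd k (fun y => H y i j m) x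
        - christoffelHatH g ginv H i m j k x - christoffelHatH g ginv H j m k i x
        - christoffelHatH g ginv H k m i j x := by
  have hpd : ∀ a b c : Fin n,
      pd a (christoffelHatLow g H m b c) x - pd a (christoffelHatLow g H m c b) x
        = pd a (fun y => H y b c m) x := by
    intro a b c
    rw [← pd_sub a ((contDiff_christoffelHatLow hg hH m b c).differentiable (by simp) x)
      ((contDiff_christoffelHatLow hg hH m c b).differentiable (by simp) x)]
    congr 1
    funext y
    rw [hg.christoffelHatLow_sub_swap hH, hH.cycle]
  have hquad : ∀ a b c : Fin n,
      ∑ p, christoffelHatLow g H p a m x * christoffelHat g ginv H p c b x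
        - ∑ p, christoffelHatLow g H p a m x * christoffelHat g ginv H p b c x
        = -christoffelHatH g ginv H a m b c x := by
    intro a b c
    rw [hg.sum_christoffelHatLow_mul_christoffelHat_comm,
      hg.sum_christoffelHatLow_mul_christoffelHat_comm (c := b), christoffelHatH,
      ← Finset.sum_sub_distrib, ← Finset.sum_neg_distrib]
    refine Finset.sum_congr rfl fun p _ => ?_
    rw [← hg.christoffelHatLow_sub_swap hH]
    ring
  rw [hg.curvHat_eq hH x i j m k, hg.curvHat_eq hH x j k m i, hg.curvHat_eq hH x k i m j]
  linarith [hpd i j k, hpd j k i, hpd k i j, hquad i j k, hquad j k i, hquad k i j]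

lemma IsRiemannianData.christoffelHatH_sub_swap (hg : IsRiemannianData g ginv)
    (hH : IsThreeForm H) (x : EuclideanSpace ℝ (Fin n)) (a b c d : Fin n) :
    christoffelHatH g ginv H a b c d x - christoffelHatH g ginv H b a c d x
      = innerH ginv H a b c d x := by
  simp only [christoffelHatH, innerH, ← Finset.sum_sub_distrib]
  refine Finset.sum_congr rfl fun p _ => ?_
  have hsym : christoffelHat g ginv H p a b x - christoffelHat g ginv H p b a x
      = ∑ l, ginv x p l * H x l a b := by
    simp only [christoffelHat_eq_sum_ginv_mul, ← Finset.sum_sub_distrib, ← mul_sub,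
      hg.christoffelHatLow_sub_swap hH]
  rw [← hsym]
  ring

lemma IsThreeForm.christoffelHatH_swap_right (hH : IsThreeForm H)
    (x : EuclideanSpace ℝ (Fin n)) (a b c d : Fin n) :
    christoffelHatH g ginv H a b d c x = -christoffelHatH g ginv H a b c d x := by
  simp only [christoffelHatH, ← Finset.sum_neg_distrib, hH.2.1 x _ d c, mul_neg]

lemma IsRiemannianData.innerH_comm (hg : IsRiemannianData g ginv)
    (x : EuclideanSpace ℝ (Fin n)) (a b c d : Fin n) :
    innerH ginv H a b c d x = innerH ginv H c d a b x := by
  simp only [innerH, Finset.sum_mul]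
  rw [Finset.sum_comm]
  refine Finset.sum_congr rfl fun p _ => Finset.sum_congr rfl fun l _ => ?_
  rw [hg.ginv_symm x l p]
  ring

/-- The torsion contributions to the identity, after `∇̂H` and `R̂` have been expanded. -/
lemma IsRiemannianData.christoffelHatH_cyclic (hg : IsRiemannianData g ginv) (hH : IsThreeForm H)
    (x : EuclideanSpace ℝ (Fin n)) (i j k m : Fin n) :
    christoffelHatH g ginv H i m j k x + christoffelHatH g ginv H j m k i x
        + christoffelHatH g ginv H k m i j x - christoffelHatH g ginv H m i j k x
        - christoffelHatH g ginv H m j k i x - christoffelHatH g ginv H m k i j x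
      = christoffelHatH g ginv H i j k m x + christoffelHatH g ginv H i k m j x
        + christoffelHatH g ginv H j k i m x + christoffelHatH g ginv H j i m k x
        + christoffelHatH g ginv H k i j m x + christoffelHatH g ginv H k j m i x := by
  linarith [hg.christoffelHatH_sub_swap hH x i m j k, hg.christoffelHatH_sub_swap hH x j m k i,
    hg.christoffelHatH_sub_swap hH x k m i j, hg.christoffelHatH_sub_swap hH x i j k m,
    hg.christoffelHatH_sub_swap hH x j k i m, hg.christoffelHatH_sub_swap hH x k i j m,
    hH.christoffelHatH_swap_right (g := g) (ginv := ginv) x i k j m,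
    hH.christoffelHatH_swap_right (g := g) (ginv := ginv) x j i k m,
    hH.christoffelHatH_swap_right (g := g) (ginv := ginv) x k j i m,
    hg.innerH_comm (H := H) x i m j k, hg.innerH_comm (H := H) x j m k i,
    hg.innerH_comm (H := H) x k m i j]

lemma IsThreeForm.nablaHatH_eq (hH : IsThreeForm H) (x : EuclideanSpace ℝ (Fin n))
    (i j k m : Fin n) :
    nablaHatH g ginv H i j k m x
      = pd i (fun y => H y j k m) x - christoffelHatH g ginv H i j k m x
        - christoffelHatH g ginv H i k m j x - christoffelHatH g ginv H i m j k x := by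
  have hcycle : ∀ p, H x j p m = H x p m j ∧ H x j k p = H x p j k := fun p =>
    ⟨hH.cycle x j p m, (hH.cycle x p j k).symm⟩
  simp only [nablaHatH, christoffelHatH, Finset.sum_add_distrib, hcycle]
  ring

lemma IsThreeForm.extDerH_eq (hH : IsThreeForm H) (x : EuclideanSpace ℝ (Fin n))
    (i j k m : Fin n) :
    extDerH H i j k m x = pd i (fun y => H y j k m) x + pd j (fun y => H y k i m) x
      + pd k (fun y => H y i j m) x - pd m (fun y => H y i j k) x := by
  have hswap : (fun y => H y i k m) = fun y => -H y k i m := funext fun y => hH.1 y i k m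
  rw [extDerH, hswap, pd_neg]
  ring

end Connection

/-- Both antisymmetrisations are written as cyclic sums, which is legitimate because `R̂_{ijkm}`
is antisymmetric in `i, j` and `H` is totally skew. -/
theorem bianchi_second
    (g ginv : EuclideanSpace ℝ (Fin n) → Fin n → Fin n → ℝ)
    (H : EuclideanSpace ℝ (Fin n) → Fin n → Fin n → Fin n → ℝ)
    (hg : IsRiemannianData g ginv) (hH : IsThreeForm H) :
    ∀ (x : EuclideanSpace ℝ (Fin n)) (i j k m : Fin n),
      curvHat g ginv H i j k m x + curvHat g ginv H j k i m x + curvHat g ginv H k i j m x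
        = -(1 / 2) * (nablaHatH g ginv H i j k m x + nablaHatH g ginv H j k i m x
              + nablaHatH g ginv H k i j m x)
          - (1 / 2) * nablaHatH g ginv H m i j k x
          - (1 / 2) * extDerH H i j k m x := by
  intro x i j k m
  rw [hH.nablaHatH_eq, hH.nablaHatH_eq, hH.nablaHatH_eq, hH.nablaHatH_eq, hH.extDerH_eq]
  linarith [hg.curvHat_swap_last hH x i j k m, hg.curvHat_swap_last hH x j k i m,
    hg.curvHat_swap_last hH x k i j m, hg.curvHat_cyclic hH x i j k m,
    hg.christoffelHatH_cyclic hH x i j k m]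
end
end

section
/- Let (M,g,H) be a Riemannian manifold with H a closed 3-form satisfying ∇̂H = 0, where ∇̂ is the metric connection with torsion H. Then H satisfies the Jacobi identity: H^p_{ij} H_{pkm} + H^p_{ik} H_{pmj} + H^p_{im} H_{pjk} = 0 (cyclic sum over j,k,m), so that at each point the operation [X,Y] := (ι_X ι_Y H)^♯ makes the tangent space into a Lie algebra. -/
open scoped BigOperators

noncomputable section

variable {n : ℕ}

/-! Since `∇̂H = 0`, every partial derivative `∂_a H_{bcd}` is an algebraic expression in `H`
through the connection coefficients `Γ̂ = Γ + ½ H^♯`. In the alternation that defines `dH`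
the symmetric Levi-Civita part `Γ` cancels, while the torsion part contributes four copies of
the Jacobi expression; hence `0 = dH = 2 · Jac`. -/

open Finset

section SkewAlgebra

variable {ι R : Type*} [Fintype ι] [CommRing R]

def raiseFirst (G : ι → ι → R) (T : ι → ι → ι → R) (p a b : ι) : R :=
  ∑ l, G p l * T l a b

def jacobiator (G : ι → ι → R) (T : ι → ι → ι → R) (i j k m : ι) : R :=
  ∑ p, (raiseFirst G T p i j * T p k m + raiseFirst G T p i k * T p m j
    + raiseFirst G T p i m * T p j k)

def connAction (Γ : ι → ι → ι → R) (T : ι → ι → ι → R) (a b c d : ι) : R :=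
  ∑ p, (Γ p a b * T p c d + Γ p a c * T b p d + Γ p a d * T b c p)

def altSum (F : ι → ι → ι → ι → R) (i j k m : ι) : R :=
  F i j k m - F j i k m + F k i j m - F m i j k

variable {T : ι → ι → ι → R}

theorem altSum_connAction_of_symm {Γ : ι → ι → ι → R} (hΓ : ∀ p a b, Γ p a b = Γ p b a)
    (hT₁ : ∀ a b c, T a b c = -T b a c) (hT₂ : ∀ a b c, T a b c = -T a c b) (i j k m : ι) :
    altSum (connAction Γ T) i j k m = 0 := by
  simp only [altSum, connAction, ← sum_sub_distrib, ← sum_add_distrib]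
  refine sum_eq_zero fun p _ => ?_
  rw [hΓ p j i, hΓ p k i, hΓ p k j, hΓ p m i, hΓ p m j, hΓ p m k, hT₁ j p m, hT₁ i p m, hT₁ i p k,
    hT₂ j k p, hT₁ j p k, hT₂ i k p, hT₁ i p k, hT₂ i j p, hT₁ i p j]
  ring

theorem altSum_connAction_add_mul (Γ Θ : ι → ι → ι → R) (c : R) (i j k m : ι) :
    altSum (connAction (fun p a b => Γ p a b + c * Θ p a b) T) i j k m
      = altSum (connAction Γ T) i j k m + c * altSum (connAction Θ T) i j k m := by
  simp only [altSum, connAction, mul_sum, ← sum_add_distrib, ← sum_sub_distrib]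
  exact sum_congr rfl fun p _ => by ring

def pairing (G : ι → ι → R) (T : ι → ι → ι → R) (a b c d : ι) : R :=
  ∑ p, raiseFirst G T p a b * T p c d

theorem pairing_comm {G : ι → ι → R} (hG : ∀ a b, G a b = G b a) (a b c d : ι) :
    pairing G T a b c d = pairing G T c d a b := by
  simp only [pairing, raiseFirst, sum_mul]
  rw [sum_comm]
  exact sum_congr rfl fun p _ => sum_congr rfl fun l _ => by rw [hG l p]; ring

theorem pairing_swap_left (G : ι → ι → R) (hT₂ : ∀ a b c, T a b c = -T a c b) (a b c d : ι) :
    pairing G T a b c d = -pairing G T b a c d := by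
  simp only [pairing, raiseFirst, hT₂ _ a b, mul_neg, sum_neg_distrib, neg_mul]

theorem connAction_raiseFirst (G : ι → ι → R) (hT₁ : ∀ a b c, T a b c = -T b a c)
    (hT₂ : ∀ a b c, T a b c = -T a c b) (a b c d : ι) :
    connAction (raiseFirst G T) T a b c d
      = pairing G T a b c d - pairing G T a c b d + pairing G T a d b c := by
  simp only [connAction, pairing, ← sum_sub_distrib, ← sum_add_distrib]
  refine sum_congr rfl fun p _ => ?_
  rw [hT₁ b p d, hT₂ b c p, hT₁ b p c]
  ring

theorem jacobiator_eq_pairing (G : ι → ι → R) (hT₂ : ∀ a b c, T a b c = -T a c b) (i j k m : ι) :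
    jacobiator G T i j k m = pairing G T i j k m - pairing G T i k j m + pairing G T i m j k := by
  simp only [jacobiator, pairing, ← sum_sub_distrib, ← sum_add_distrib]
  refine sum_congr rfl fun p _ => ?_
  rw [hT₂ p m j]
  ring

theorem altSum_connAction_raiseFirst {G : ι → ι → R} (hG : ∀ a b, G a b = G b a)
    (hT₁ : ∀ a b c, T a b c = -T b a c) (hT₂ : ∀ a b c, T a b c = -T a c b) (i j k m : ι) :
    altSum (connAction (raiseFirst G T) T) i j k m = 4 * jacobiator G T i j k m := by
  simp only [altSum, connAction_raiseFirst G hT₁ hT₂, jacobiator_eq_pairing G hT₂]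
  rw [pairing_swap_left G hT₂ j i, pairing_swap_left G hT₂ k i, pairing_swap_left G hT₂ k j,
    pairing_swap_left G hT₂ m i, pairing_swap_left G hT₂ m j, pairing_swap_left G hT₂ m k,
    pairing_comm hG j k, pairing_comm hG j m, pairing_comm hG k m]
  ring

theorem symm_of_mul_eq_one [DecidableEq ι] {G Gi : ι → ι → R} (hG : ∀ a b, G a b = G b a)
    (hGi : ∀ a b, ∑ c, G a c * Gi c b = if a = b then 1 else 0) (a b : ι) :
    Gi a b = Gi b a := by
  have hmul : Matrix.of G * Matrix.of Gi = 1 := by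
    ext a b
    simpa [Matrix.mul_apply, Matrix.one_apply] using hGi a b
  have hsymm : (Matrix.of G).IsSymm := Matrix.IsSymm.ext fun a b => hG b a
  have := congrFun (congrFun (Matrix.inv_eq_right_inv hmul ▸ hsymm.inv) b) a
  simpa using this

end SkewAlgebra

variable {g ginv : EuclideanSpace ℝ (Fin n) → Fin n → Fin n → ℝ}
  {H : EuclideanSpace ℝ (Fin n) → Fin n → Fin n → Fin n → ℝ}

theorem christoffel_symm (hg : ∀ x i j, g x i j = g x j i) (x : EuclideanSpace ℝ (Fin n))
    (k i j : Fin n) : christoffel g ginv k i j x = christoffel g ginv k j i x := by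
  have hswap : (fun y => g y i j) = fun y => g y j i := funext fun y => hg y i j
  simp only [christoffel, christoffelLow, hswap]
  exact sum_congr rfl fun l _ => by ring

theorem extDerH_eq_altSum_of_parallel
    (hpar : ∀ x i j k m, nablaHatH g ginv H i j k m x = 0) (x : EuclideanSpace ℝ (Fin n))
    (i j k m : Fin n) :
    extDerH H i j k m x
      = altSum (connAction (fun p a b => christoffelHat g ginv H p a b x) (H x)) i j k m := by
  have hpd : ∀ a b c d, pd a (fun y => H y b c d) x
      = connAction (fun p a b => christoffelHat g ginv H p a b x) (H x) a b c d :=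
    fun a b c d => sub_eq_zero.mp (hpar x a b c d)
  simp only [extDerH, altSum, hpd]

theorem christoffelHat_eq_add (x : EuclideanSpace ℝ (Fin n)) :
    (fun p a b => christoffelHat g ginv H p a b x)
      = fun p a b => christoffel g ginv p a b x + 1 / 2 * raiseFirst (ginv x) (H x) p a b :=
  rfl

/-- If the 3-form `H` is closed and `∇̂`-covariantly constant, then `H`
satisfies the Jacobi identity
`H^p_{ij} H_{pkm} + H^p_{ik} H_{pmj} + H^p_{im} H_{pjk} = 0`
(cyclic sum over `j,k,m`, indices raised with `g`), so that at each point the bracket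
`[X,Y] := (ι_X ι_Y H)^♯` makes the tangent space into a Lie algebra. -/
theorem jacobi_of_parallel_closed
    (g ginv : EuclideanSpace ℝ (Fin n) → Fin n → Fin n → ℝ)
    (H : EuclideanSpace ℝ (Fin n) → Fin n → Fin n → Fin n → ℝ)
    (hg : IsRiemannianData g ginv) (hH : IsThreeForm H)
    (hclosed : ∀ (x : EuclideanSpace ℝ (Fin n)) (i j k m : Fin n), extDerH H i j k m x = 0)
    (hpar : ∀ (x : EuclideanSpace ℝ (Fin n)) (i j k m : Fin n),
      nablaHatH g ginv H i j k m x = 0) :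
    ∀ (x : EuclideanSpace ℝ (Fin n)) (i j k m : Fin n),
      ∑ p, ((∑ l, ginv x p l * H x l i j) * H x p k m
          + (∑ l, ginv x p l * H x l i k) * H x p m j
          + (∑ l, ginv x p l * H x l i m) * H x p j k) = 0 := by
  obtain ⟨hg_symm, -, hg_inv, -, -⟩ := hg
  obtain ⟨hH₁, hH₂, -⟩ := hH
  intro x i j k m
  have hdH := hclosed x i j k m
  rw [extDerH_eq_altSum_of_parallel hpar, christoffelHat_eq_add, altSum_connAction_add_mul,
    altSum_connAction_of_symm (christoffel_symm hg_symm x) (hH₁ x) (hH₂ x),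
    altSum_connAction_raiseFirst (symm_of_mul_eq_one (hg_symm x) (hg_inv x)) (hH₁ x) (hH₂ x)] at hdH
  show jacobiator (ginv x) (H x) i j k m = 0
  linarith
end
end
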